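/- Let ℓ : [0,∞) → [0,∞) be decreasing with ℓ(r) ∈ o(r^{−d}) and τ > 0. Then lim_{n→∞} n^{−d} ∫_{ℝ^d \ Λ_{4n}} [exp(τ (2n)^d ℓ((1+√d)^{−1}|x|)) − 1] dx = 0. -/

import Mathlib

/-!
Outside the cube `Λ_{4n}` one has `‖x‖ ≥ 2n`, so by monotonicity the exponent
`u = τ (2n)^d ℓ(c‖x‖)` is at most `τ (2n)^d ℓ(2cn)`, which tends to `0` because
`ℓ(r) = o(r^{-d})`. Once `u ≤ 1`, `e^u - 1 ≤ 2u`, and after dividing by `n^d` the integral is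
bounded by `2^{d+1} τ` times the integral of `ℓ(c‖·‖)` outside the ball of radius `2n`. That
function is integrable (a rescaling of `ℓ(‖·‖)`), so its tail integrals tend to `0`.
-/

open MeasureTheory Filter Asymptotics

lemma Asymptotics.IsLittleO.tendsto_pow_mul_of_rpow_neg {f : ℝ → ℝ} {d : ℕ}
    (h : f =o[atTop] fun r : ℝ => r ^ (-(d : ℝ))) :
    Tendsto (fun r => r ^ d * f r) atTop (nhds 0) := by
  refine h.tendsto_div_nhds_zero.congr' ?_
  filter_upwards [eventually_gt_atTop 0] with r hr
  rw [Real.rpow_neg hr.le, Real.rpow_natCast, div_inv_eq_mul, mul_comm]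

lemma tendsto_setIntegral_compl_ball {E F : Type*} [PseudoMetricSpace E] [MeasurableSpace E]
    [OpensMeasurableSpace E] [NormedAddCommGroup F] [NormedSpace ℝ F] {μ : Measure E}
    {f : E → F} (hf : Integrable f μ) (x₀ : E) :
    Tendsto (fun R : ℝ => ∫ x in (Metric.ball x₀ R)ᶜ, f x ∂μ) atTop (nhds 0) := by
  have hempty : ⋂ R : ℝ, (Metric.ball x₀ R)ᶜ = ∅ := by
    rw [← Set.compl_iUnion, Set.compl_empty_iff]
    exact Set.iUnion_eq_univ_iff.2 fun y => ⟨dist y x₀ + 1, by simp⟩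
  have := tendsto_setIntegral_of_antitone (μ := μ) (s := fun R : ℝ => (Metric.ball x₀ R)ᶜ)
    (fun R => measurableSet_ball.compl)
    (fun R R' h => Set.compl_subset_compl.2 (Metric.ball_subset_ball h)) ⟨0, hf.integrableOn⟩
  rwa [hempty, Measure.restrict_empty, integral_zero_measure] at this

lemma setIntegral_exp_mul_sub_one_le {X : Type*} [MeasurableSpace X] {μ : Measure X}
    {s : Set X} (hs : MeasurableSet s) {g : X → ℝ} (hg : IntegrableOn g s μ)
    (hg0 : ∀ x ∈ s, 0 ≤ g x) {a : ℝ} (ha : 0 ≤ a) (hsmall : ∀ x ∈ s, a * g x ≤ 1) :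
    ∫ x in s, (Real.exp (a * g x) - 1) ∂μ ≤ 2 * a * ∫ x in s, g x ∂μ := by
  have hu0 : ∀ x ∈ s, 0 ≤ a * g x := fun x hx => mul_nonneg ha (hg0 x hx)
  rw [← integral_const_mul]
  refine integral_mono_of_nonneg (ae_restrict_of_forall_mem hs fun x hx => ?_)
    (hg.const_mul _) (ae_restrict_of_forall_mem hs fun x hx => ?_)
  · simpa using Real.one_le_exp (hu0 x hx)
  · have := Real.abs_exp_sub_one_le (x := a * g x) (by rw [abs_of_nonneg (hu0 x hx)]; exact hsmall x hx)
    rw [abs_of_nonneg (hu0 x hx)] at this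
    linarith [le_abs_self (Real.exp (a * g x) - 1)]

lemma EuclideanSpace.measurableSet_not_forall_abs_le {ι : Type*} [Fintype ι] (R : ℝ) :
    MeasurableSet {x : EuclideanSpace ℝ ι | ¬ ∀ i, |x i| ≤ R} := by
  measurability

lemma EuclideanSpace.not_forall_abs_le_subset_compl_ball {ι : Type*} [Fintype ι] (R : ℝ) :
    {x : EuclideanSpace ℝ ι | ¬ ∀ i, |x i| ≤ R} ⊆ (Metric.ball 0 R)ᶜ := by
  intro x hx
  push Not at hx
  obtain ⟨i, hi⟩ := hx
  simpa using hi.le.trans (PiLp.norm_apply_le x i)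

lemma MeasureTheory.Integrable.comp_mul_norm {E F : Type*} [NormedAddCommGroup E]
    [NormedSpace ℝ E] [MeasurableSpace E] [BorelSpace E] [FiniteDimensional ℝ E]
    [NormedAddCommGroup F] {μ : Measure E} [μ.IsAddHaarMeasure] {f : ℝ → F}
    (hf : Integrable (fun x => f ‖x‖) μ) {c : ℝ} (hc : 0 < c) :
    Integrable (fun x => f (c * ‖x‖)) μ := by
  simpa [norm_smul, abs_of_pos hc] using
    (integrable_comp_smul_iff μ (fun x => f ‖x‖) hc.ne').2 hf

lemma Asymptotics.IsLittleO.tendsto_const_mul_pow_mul_comp_mul {f : ℝ → ℝ} {d : ℕ}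
    (h : f =o[atTop] fun r : ℝ => r ^ (-(d : ℝ))) (a : ℝ) {c : ℝ} (hc : 0 < c) :
    Tendsto (fun R => a * R ^ d * f (c * R)) atTop (nhds 0) := by
  have := (h.tendsto_pow_mul_of_rpow_neg.comp
    (tendsto_id.const_mul_atTop hc)).const_mul (a / c ^ d)
  rw [mul_zero] at this
  refine this.congr fun R => ?_
  simp only [Function.comp_apply, id, mul_pow]
  field_simp

lemma setIntegral_not_forall_abs_le_exp_sub_one_le {ι : Type*} [Fintype ι] {f : ℝ → ℝ}
    (hmono : AntitoneOn f (Set.Ici 0)) (hpos : ∀ r, 0 ≤ r → 0 ≤ f r) {c : ℝ} (hc : 0 ≤ c)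
    (hf : Integrable fun x : EuclideanSpace ℝ ι => f (c * ‖x‖)) {a R : ℝ} (ha : 0 ≤ a)
    (hR : 0 ≤ R) (hsmall : a * f (c * R) ≤ 1) :
    ∫ x in {x : EuclideanSpace ℝ ι | ¬ ∀ i, |x i| ≤ R}, (Real.exp (a * f (c * ‖x‖)) - 1)
      ≤ 2 * a * ∫ x in (Metric.ball (0 : EuclideanSpace ℝ ι) R)ᶜ, f (c * ‖x‖) := by
  have hf0 (x : EuclideanSpace ℝ ι) : 0 ≤ f (c * ‖x‖) := hpos _ (by positivity)
  have hS := EuclideanSpace.not_forall_abs_le_subset_compl_ball (ι := ι) R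
  have hbound (x) (hx : x ∈ {x : EuclideanSpace ℝ ι | ¬ ∀ i, |x i| ≤ R}) :
      a * f (c * ‖x‖) ≤ 1 := by
    have hx : R ≤ ‖x‖ := by simpa using hS hx
    refine le_trans (mul_le_mul_of_nonneg_left (hmono ?_ ?_ ?_) ha) hsmall
    exacts [Set.mem_Ici.2 (by positivity), Set.mem_Ici.2 (by positivity), by gcongr]
  calc _ ≤ 2 * a * ∫ x in {x : EuclideanSpace ℝ ι | ¬ ∀ i, |x i| ≤ R}, f (c * ‖x‖) :=
        setIntegral_exp_mul_sub_one_le (EuclideanSpace.measurableSet_not_forall_abs_le R)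
          hf.integrableOn (fun x _ => hf0 x) ha hbound
    _ ≤ 2 * a * ∫ x in (Metric.ball (0 : EuclideanSpace ℝ ι) R)ᶜ, f (c * ‖x‖) := by
        gcongr
        exacts [ae_of_all _ hf0, hf.integrableOn]

theorem stmt_4_general (d : ℕ) (τ : ℝ) (hτ : 0 < τ)
    (ℓ : ℝ → ℝ) (hmono : AntitoneOn ℓ (Set.Ici 0)) (hpos : ∀ r, 0 ≤ r → 0 ≤ ℓ r)
    (ho : ℓ =o[atTop] fun r : ℝ => r ^ (-(d : ℝ)))
    (hint : Integrable (fun x : EuclideanSpace ℝ (Fin d) => ℓ ‖x‖)) :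
    Tendsto (fun n : ℕ => ((n : ℝ) ^ d)⁻¹ *
        ∫ x in {x : EuclideanSpace ℝ (Fin d) | ¬ ∀ i, |x i| ≤ 2 * (n : ℝ)},
          (Real.exp (τ * (2 * (n : ℝ)) ^ d * ℓ ((1 + Real.sqrt d)⁻¹ * ‖x‖)) - 1))
      atTop (nhds 0) := by
  set c : ℝ := (1 + Real.sqrt d)⁻¹
  have hc : 0 < c := by positivity
  have hg : Integrable fun x : EuclideanSpace ℝ (Fin d) => ℓ (c * ‖x‖) := hint.comp_mul_norm hc
  have h2n : Tendsto (fun n : ℕ => 2 * (n : ℝ)) atTop atTop :=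
    tendsto_natCast_atTop_atTop.const_mul_atTop two_pos
  have hsmall : ∀ᶠ n : ℕ in atTop, τ * (2 * (n : ℝ)) ^ d * ℓ (c * (2 * n)) ≤ 1 :=
    h2n.eventually ((ho.tendsto_const_mul_pow_mul_comp_mul τ hc).eventually (ge_mem_nhds one_pos))
  have htail := ((tendsto_setIntegral_compl_ball hg 0).comp h2n).const_mul (2 * τ * 2 ^ d)
  rw [mul_zero] at htail
  refine squeeze_zero' (Eventually.of_forall fun n => ?_) ?_ htail
  · refine mul_nonneg (by positivity) (setIntegral_nonneg
      (EuclideanSpace.measurableSet_not_forall_abs_le _) fun x _ => ?_)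
    exact sub_nonneg.2 (Real.one_le_exp (mul_nonneg (by positivity) (hpos _ (by positivity))))
  filter_upwards [hsmall, eventually_gt_atTop 0] with n hn hn_pos
  have hn0 : (n : ℝ) ^ d ≠ 0 := by positivity
  calc _ ≤ ((n : ℝ) ^ d)⁻¹ * (2 * (τ * (2 * (n : ℝ)) ^ d) *
        ∫ x in (Metric.ball (0 : EuclideanSpace ℝ (Fin d)) (2 * (n : ℝ)))ᶜ, ℓ (c * ‖x‖)) := by
        gcongr
        exact setIntegral_not_forall_abs_le_exp_sub_one_le hmono hpos hc.le hg (by positivity)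
          (by positivity) hn
    _ = _ := by
        simp only [Function.comp_apply]
        field_simp
        ring

theorem stmt_4 (d : ℕ) (hd : 0 < d) (τ : ℝ) (hτ : 0 < τ)
    (ℓ : ℝ → ℝ) (hmono : AntitoneOn ℓ (Set.Ici 0)) (hpos : ∀ r, 0 ≤ r → 0 ≤ ℓ r)
    (ho : ℓ =o[atTop] fun r : ℝ => r ^ (-(d : ℝ)))
    (hint : Integrable (fun x : EuclideanSpace ℝ (Fin d) => ℓ ‖x‖)) :
    Tendsto (fun n : ℕ => ((n : ℝ) ^ d)⁻¹ *
        ∫ x in {x : EuclideanSpace ℝ (Fin d) | ¬ ∀ i, |x i| ≤ 2 * (n : ℝ)},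
          (Real.exp (τ * (2 * (n : ℝ)) ^ d * ℓ ((1 + Real.sqrt d)⁻¹ * ‖x‖)) - 1))
      atTop (nhds 0) :=
  stmt_4_general d τ hτ ℓ hmono hpos ho hint
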